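/- Let G be an AG-group with left identity e and μ a fuzzy AG-subgroup of G. Then for all x, y ∈ G: μ_x = μ_y (as functions on G) if and only if μ*x = μ*y (as subsets of G), where μ* = {a ∈ G : μ(a) = μ(e)}. -/
import Mathlib


/-- An AG-group: a groupoid satisfying the left invertive law, with a left
identity `e` and two-sided inverses. -/
class AGGroup (G : Type*) where
  mul : G → G → G
  e : G
  inv : G → G
  left_invertive : ∀ a b c : G, mul (mul a b) c = mul (mul c b) a
  left_id : ∀ a : G, mul e a = a
  inv_mul : ∀ a : G, mul (inv a) a = e
  mul_inv : ∀ a : G, mul a (inv a) = e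

namespace AGGroup

variable {G : Type*} [AGGroup G]

/-- A fuzzy AG-subgroup: a fuzzy subset (a map into `[0,1]`) with
`μ(xy) ≥ min (μ x) (μ y)` and `μ x⁻¹ ≥ μ x`. -/
def IsFuzzyAGSubgroup (μ : G → ℝ) : Prop :=
  (∀ x : G, μ x ∈ Set.Icc (0 : ℝ) 1) ∧
  (∀ x y : G, μ (mul x y) ≥ min (μ x) (μ y)) ∧
  (∀ x : G, μ (inv x) ≥ μ x)

/-- A normal fuzzy AG-subgroup: a fuzzy AG-subgroup with `μ((xy)x⁻¹) = μ y`. -/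
def IsNormalFuzzyAGSubgroup (μ : G → ℝ) : Prop :=
  IsFuzzyAGSubgroup μ ∧ ∀ x y : G, μ (mul (mul x y) (inv x)) = μ y

/-- The fuzzy coset `μ_x`, given by `μ_x g = μ (g x⁻¹)`. -/
def fuzzyCoset (μ : G → ℝ) (x : G) : G → ℝ :=
  fun g => μ (mul g (inv x))

/-- The level set `μ* = {a : μ a = μ e}` of a fuzzy AG-subgroup. -/
def levelSet (μ : G → ℝ) : Set G := {a : G | μ a = μ e}

/-- The right coset `S x = {s x : s ∈ S}` of a subset `S`. -/
def rightCoset (S : Set G) (x : G) : Set G := (fun s => mul s x) '' S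

/-- An AG-subgroup: a nonempty subset closed under the operation and inverses. -/
def IsAGSubgroup (H : Set G) : Prop :=
  H.Nonempty ∧ (∀ a ∈ H, ∀ b ∈ H, mul a b ∈ H) ∧ (∀ a ∈ H, inv a ∈ H)

end AGGroup

open AGGroup

section FCAux
open AGGroup
variable {G : Type*} [AGGroup G]

lemma fc_mul_inv_cancel_right (a b : G) : mul (mul a (inv b)) b = a := by
  rw [left_invertive, AGGroup.mul_inv, left_id]

lemma fc_mul_cancel_right (a b : G) : mul (mul a b) (inv b) = a := by
  rw [left_invertive, inv_mul, left_id]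

lemma fc_medial (a b c d : G) :
    mul (mul a b) (mul c d) = mul (mul a c) (mul b d) := by
  rw [left_invertive a b (mul c d), left_invertive c d b,
    left_invertive (mul b d) c a]

lemma fc_left_perm (a b c : G) : mul a (mul b c) = mul b (mul a c) := by
  calc mul a (mul b c) = mul (mul e a) (mul b c) := by rw [left_id]
    _ = mul (mul e b) (mul a c) := fc_medial _ _ _ _
    _ = mul b (mul a c) := by rw [left_id]

lemma fc_inv_unique {a b : G} (h : mul b a = e) : b = inv a := by
  have := fc_mul_cancel_right b a
  rw [h, left_id] at this
  exact this.symm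

lemma fc_inv_mul (a b : G) : inv (mul a b) = mul (inv a) (inv b) := by
  refine (fc_inv_unique ?_).symm
  rw [fc_medial, inv_mul, inv_mul, left_id]

lemma fc_mu_e_ge {μ : G → ℝ} (hμ : IsFuzzyAGSubgroup μ) (a : G) : μ a ≤ μ e := by
  obtain ⟨-, h2, h3⟩ := hμ
  have := h2 a (inv a)
  rw [AGGroup.mul_inv] at this
  exact le_trans (le_min le_rfl (h3 a)) this

lemma fc_subset {μ : G → ℝ} {x y : G}
    (h : ∀ g, μ (mul g (inv x)) = μ (mul g (inv y))) :
    rightCoset (levelSet μ) x ⊆ rightCoset (levelSet μ) y := by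
  rintro g ⟨s, hs, rfl⟩
  refine ⟨mul (mul s x) (inv y), ?_, fc_mul_inv_cancel_right _ _⟩
  show μ (mul (mul s x) (inv y)) = μ e
  rw [← h, fc_mul_cancel_right]
  exact hs

lemma fc_ge {μ : G → ℝ} (hμ : IsFuzzyAGSubgroup μ) {x y : G}
    (ht : μ (mul x (inv y)) = μ e) (g : G) :
    μ (mul g (inv y)) ≤ μ (mul g (inv x)) := by
  obtain ⟨h1, h2, h3⟩ := hμ
  set t := mul x (inv y) with htdef
  have hx : mul t y = x := fc_mul_inv_cancel_right x y
  have hinvx : inv x = mul (inv t) (inv y) := by rw [← hx, fc_inv_mul]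
  have : mul g (inv x) = mul (inv t) (mul g (inv y)) := by
    rw [hinvx, fc_left_perm]
  rw [this]
  refine le_trans (le_min ?_ le_rfl) (h2 _ _)
  calc μ (mul g (inv y)) ≤ μ e := fc_mu_e_ge ⟨h1, h2, h3⟩ _
    _ = μ t := ht.symm
    _ ≤ μ (inv t) := h3 t

lemma fc_mem_self {μ : G → ℝ} {x z : G}
    (h : rightCoset (levelSet μ) x = rightCoset (levelSet μ) z) :
    μ (mul x (inv z)) = μ e := by
  have hx : x ∈ rightCoset (levelSet μ) z := by
    rw [← h]; exact ⟨e, rfl, left_id x⟩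
  obtain ⟨t, ht, htz⟩ := hx
  have : mul x (inv z) = t := by rw [← htz, fc_mul_cancel_right]
  rw [this]; exact ht

end FCAux

/-- `μ_x = μ_y` iff `μ* x = μ* y`. -/
theorem fuzzyCoset_eq_iff_levelSet_coset_eq {G : Type*} [AGGroup G] (μ : G → ℝ)
    (hμ : IsFuzzyAGSubgroup μ) (x y : G) :
    fuzzyCoset μ x = fuzzyCoset μ y ↔
      rightCoset (levelSet μ) x = rightCoset (levelSet μ) y := by
  constructor
  · intro h
    have h' : ∀ g : G, μ (AGGroup.mul g (AGGroup.inv x)) = μ (AGGroup.mul g (AGGroup.inv y)) :=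
      fun g => congrFun h g
    exact Set.Subset.antisymm (fc_subset h') (fc_subset (fun g => (h' g).symm))
  · intro h
    funext g
    exact le_antisymm (fc_ge hμ (fc_mem_self h.symm) g) (fc_ge hμ (fc_mem_self h) g)
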